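/- If x and y are strongly maximal elements of a continuous dcpo D and there exists a Scott open set containing x but not y (or vice versa), then x and y are Hausdorff separated, i.e. there exist disjoint Scott open sets U and V with x ∈ U and y ∈ V. -/

import Mathlib

open Classical

def IsDcpo (D : Type*) [PartialOrder D] : Prop :=
  ∀ S : Set D, S.Nonempty → DirectedOn (· ≤ ·) S → ∃ s, IsLUB S s

def WayBelow {D : Type*} [PartialOrder D] (x y : D) : Prop :=
  ∀ S : Set D, S.Nonempty → DirectedOn (· ≤ ·) S →
    ∀ s, IsLUB S s → y ≤ s → ∃ a ∈ S, x ≤ a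

def ScottOpen {D : Type*} [PartialOrder D] (U : Set D) : Prop :=
  IsUpperSet U ∧ ∀ S : Set D, S.Nonempty → DirectedOn (· ≤ ·) S →
    ∀ s, IsLUB S s → s ∈ U → ∃ a ∈ S, a ∈ U

def ScottClosed {D : Type*} [PartialOrder D] (C : Set D) : Prop :=
  IsLowerSet C ∧ ∀ S : Set D, S.Nonempty → DirectedOn (· ≤ ·) S →
    S ⊆ C → ∀ s, IsLUB S s → s ∈ C

def IsBasis {D : Type*} [PartialOrder D] (B : Set D) : Prop :=
  ∀ x : D, (B ∩ {y | WayBelow y x}).Nonempty ∧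
    DirectedOn (· ≤ ·) (B ∩ {y | WayBelow y x}) ∧
    IsLUB (B ∩ {y | WayBelow y x}) x

def DcpoContinuous (D : Type*) [PartialOrder D] : Prop :=
  ∀ x : D, ({y | WayBelow y x} : Set D).Nonempty ∧
    DirectedOn (· ≤ ·) ({y | WayBelow y x} : Set D) ∧
    IsLUB ({y | WayBelow y x} : Set D) x

def DcpoAlgebraic (D : Type*) [PartialOrder D] : Prop :=
  ∀ x : D, ({c | WayBelow c c ∧ c ≤ x} : Set D).Nonempty ∧
    DirectedOn (· ≤ ·) ({c | WayBelow c c ∧ c ≤ x} : Set D) ∧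
    IsLUB ({c | WayBelow c c ∧ c ≤ x} : Set D) x

def HausdorffSep {D : Type*} [PartialOrder D] (x y : D) : Prop :=
  ∃ U V : Set D, ScottOpen U ∧ ScottOpen V ∧ x ∈ U ∧ y ∈ V ∧ U ∩ V = ∅

def StronglyMaximal {D : Type*} [PartialOrder D] (x : D) : Prop :=
  ∀ u v : D, WayBelow u v → WayBelow u x ∨ HausdorffSep v x

def Sharp {D : Type*} [PartialOrder D] (x : D) : Prop :=
  ∀ y z : D, WayBelow y z → WayBelow y x ∨ ∃ U : Set D, ScottOpen U ∧ z ∈ U ∧ x ∉ U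

noncomputable def step {D E : Type*} [PartialOrder D] [PartialOrder E] [OrderBot E]
    (x : D) (y : E) : D → E :=
  fun d => if x ≤ d then y else ⊥

/-! Since `x` is the directed supremum of the elements way below it, a Scott open set around `x`
contains some `u ≪ x`. Strong maximality of `y`, applied to `u ≪ x`, either gives `u ≪ y`, which
would put `y` in that open set, or separates `x` from `y`. -/

theorem WayBelow.le {D : Type*} [PartialOrder D] {u v : D} (h : WayBelow u v) : u ≤ v := by
  obtain ⟨a, rfl, hua⟩ := h {v} ⟨v, rfl⟩
    (fun a ha b hb => ⟨v, rfl, ha.le, hb.le⟩) v isLUB_singleton le_rfl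
  exact hua

theorem HausdorffSep.symm {D : Type*} [PartialOrder D] {a b : D} (h : HausdorffSep a b) :
    HausdorffSep b a := by
  obtain ⟨U, V, hU, hV, haU, hbV, hUV⟩ := h
  exact ⟨V, U, hV, hU, hbV, haU, by rwa [Set.inter_comm]⟩

theorem ScottOpen.exists_wayBelow_mem {D : Type*} [PartialOrder D] (hc : DcpoContinuous D)
    {U : Set D} (hU : ScottOpen U) {x : D} (hxU : x ∈ U) : ∃ u, WayBelow u x ∧ u ∈ U :=
  let ⟨hne, hdir, hlub⟩ := hc x
  hU.2 _ hne hdir x hlub hxU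

theorem StronglyMaximal.hausdorffSep_of_scottOpen {D : Type*} [PartialOrder D]
    (hc : DcpoContinuous D) {x y : D} (hy : StronglyMaximal y) {U : Set D} (hU : ScottOpen U)
    (hxU : x ∈ U) (hyU : y ∉ U) : HausdorffSep x y := by
  obtain ⟨u, hux, huU⟩ := hU.exists_wayBelow_mem hc hxU
  refine (hy u x hux).resolve_left fun huy => hyU ?_
  exact hU.1 huy.le huU

theorem stmt17_general {D : Type*} [PartialOrder D]
    (hc : DcpoContinuous D) (x y : D)
    (hx : StronglyMaximal x) (hy : StronglyMaximal y)
    (h : (∃ U : Set D, ScottOpen U ∧ x ∈ U ∧ y ∉ U) ∨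
         (∃ U : Set D, ScottOpen U ∧ y ∈ U ∧ x ∉ U)) :
    HausdorffSep x y := by
  rcases h with ⟨U, hU, hxU, hyU⟩ | ⟨U, hU, hyU, hxU⟩
  · exact hy.hausdorffSep_of_scottOpen hc hU hxU hyU
  · exact (hx.hausdorffSep_of_scottOpen hc hU hyU hxU).symm

theorem stmt17 {D : Type*} [PartialOrder D] (hD : IsDcpo D)
    (hc : DcpoContinuous D) (x y : D)
    (hx : StronglyMaximal x) (hy : StronglyMaximal y)
    (h : (∃ U : Set D, ScottOpen U ∧ x ∈ U ∧ y ∉ U) ∨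
         (∃ U : Set D, ScottOpen U ∧ y ∈ U ∧ x ∉ U)) :
    HausdorffSep x y :=
  stmt17_general hc x y hx hy h
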